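/- Suppose t_1, …, t_n are bounded operators on H with t_i* t_j = δ_{ij}·1 for all i, j (isometries with pairwise orthogonal ranges), and let Θ(x) = Σ_{i=1}^n t_i x t_i*. Then for every k ≥ 1, Tr(1 − Θ^k(1)) = (Σ_{j=0}^{k−1} n^j)·Tr(1 − Θ(1)) in [0,∞]. Consequently, if Tr(1 − Θ(1)) < ∞, then Tr(1 − Θ^k(1))/(Σ_{j=0}^{k−1} n^j) → Tr(1 − Θ(1)) as k → ∞. -/

import Mathlib

/-!
`Θ` is a non-unital `⋆`-endomorphism, so the `Pₖ = Θᵏ(1)` are projections and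
`1 - Pₖ₊₁ = (1 - Θ 1) + Θ (1 - Pₖ)` is a sum of two positive operators. The trace is additive
on positive operators, and `Tr (t q t*) = Tr q` for an isometry `t` and `q ≥ 0`: writing
`q = s* s`, this is `Tr (x* x) = Tr (x x*)` for `x = s t*`, which is Parseval's identity plus
Tonelli. Hence `Tr (Θ q) = n · Tr q`, and `aₖ = Tr (1 - Pₖ)` satisfies `a₀ = 0`,
`aₖ₊₁ = a₁ + n · aₖ`, which gives the geometric sum. For `k ≥ 1` that sum is nonzero and
finite, so the quotient is constantly `Tr (1 - Θ 1)`.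
-/

open Filter Finset ContinuousLinearMap
open scoped ENNReal

/-- The trace (in `[0,∞]`) of an operator on a complex Hilbert space, computed in a
Hilbert (orthonormal) basis `b`: `Tr A = ∑ᵢ ⟨bᵢ, A bᵢ⟩` (real part, clamped to `[0,∞]`).
For a positive operator this is the usual trace, independent of the choice of basis. -/
noncomputable def opTrace {H : Type*} [NormedAddCommGroup H] [InnerProductSpace ℂ H]
    [CompleteSpace H] {ι : Type*} (b : HilbertBasis ι ℂ H) (A : H →L[ℂ] H) : ℝ≥0∞ :=
  ∑' i, ENNReal.ofReal (inner ℂ (b i) (A (b i)) : ℂ).re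

section SumConj

variable {A : Type*} [Semiring A] [StarRing A] {κ : Type*} [Fintype κ] [DecidableEq κ]

def sumConjStarHom (t : κ → A) (ht : ∀ i j, star (t i) * t j = if i = j then 1 else 0) :
    A →⋆ₙ+* A where
  toFun x := ∑ i, t i * x * star (t i)
  map_zero' := by simp
  map_add' x y := by simp only [mul_add, add_mul, Finset.sum_add_distrib]
  map_mul' x y := by
    have hcancel : ∀ i j, t i * x * star (t i) * (t j * y * star (t j))
        = if i = j then t i * (x * y) * star (t i) else 0 := fun i j => by
      calc t i * x * star (t i) * (t j * y * star (t j))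
          = t i * x * (star (t i) * t j) * y * star (t j) := by simp only [mul_assoc]
        _ = _ := by split_ifs <;> simp_all [mul_assoc]
    simp only [Finset.sum_mul_sum, hcancel, Finset.sum_ite_eq, Finset.mem_univ, if_true]
  map_star' x := by simp only [star_sum, star_mul, star_star, mul_assoc]

end SumConj

namespace HilbertBasis

variable {H : Type*} [NormedAddCommGroup H] [InnerProductSpace ℂ H] {ι : Type*}

theorem ofReal_norm_sq_eq_tsum (b : HilbertBasis ι ℂ H) (v : H) :
    ENNReal.ofReal (‖v‖ ^ 2) = ∑' i, ENNReal.ofReal (‖inner ℂ (b i) v‖ ^ 2) := by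
  have hterm : ∀ i, (inner ℂ v (b i) * inner ℂ (b i) v).re = ‖inner ℂ (b i) v‖ ^ 2 := fun i => by
    rw [← inner_conj_symm (b i) v, Complex.mul_conj', Complex.norm_conj]
    norm_cast
  have hsum : HasSum (fun i => ‖inner ℂ (b i) v‖ ^ 2) (‖v‖ ^ 2) := by
    have := (b.hasSum_inner_mul_inner v v).mapL Complex.reCLM
    simp only [Complex.reCLM_apply, hterm, inner_self_eq_norm_sq_to_K] at this
    exact_mod_cast this
  rw [← hsum.tsum_eq, ENNReal.ofReal_tsum_of_nonneg (fun _ => sq_nonneg _) hsum.summable]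

theorem tsum_ofReal_norm_sq_adjoint [CompleteSpace H] (b : HilbertBasis ι ℂ H)
    (s : H →L[ℂ] H) :
    ∑' i, ENNReal.ofReal (‖adjoint s (b i)‖ ^ 2) = ∑' i, ENNReal.ofReal (‖s (b i)‖ ^ 2) := by
  simp only [b.ofReal_norm_sq_eq_tsum, adjoint_inner_right, norm_inner_symm (b _) (s _)]
  exact ENNReal.tsum_comm

end HilbertBasis

section OpTrace

variable {H : Type*} [NormedAddCommGroup H] [InnerProductSpace ℂ H] [CompleteSpace H]
  {ι : Type*} (b : HilbertBasis ι ℂ H)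

theorem opTrace_zero : opTrace b 0 = 0 := by simp [opTrace]

theorem opTrace_star_mul_self (s : H →L[ℂ] H) :
    opTrace b (star s * s) = ∑' i, ENNReal.ofReal (‖s (b i)‖ ^ 2) := by
  refine tsum_congr fun i => ?_
  rw [mul_apply_eq_comp, star_eq_adjoint, adjoint_inner_right, inner_self_eq_norm_sq_to_K]
  norm_cast

theorem opTrace_mul_star_self (s : H →L[ℂ] H) :
    opTrace b (s * star s) = opTrace b (star s * s) := by
  have h := opTrace_star_mul_self b (star s)
  rw [star_star] at h
  rw [h, opTrace_star_mul_self, star_eq_adjoint, b.tsum_ofReal_norm_sq_adjoint]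

theorem opTrace_add {A B : H →L[ℂ] H} (hA : 0 ≤ A) (hB : 0 ≤ B) :
    opTrace b (A + B) = opTrace b A + opTrace b B := by
  rw [opTrace, opTrace, opTrace, ← ENNReal.tsum_add]
  refine tsum_congr fun i => ?_
  rw [add_apply, inner_add_right, Complex.add_re, ENNReal.ofReal_add]
  · exact ((nonneg_iff_isPositive A).1 hA).re_inner_nonneg_right (b i)
  · exact ((nonneg_iff_isPositive B).1 hB).re_inner_nonneg_right (b i)

theorem opTrace_sum {κ : Type*} (s : Finset κ) {A : κ → H →L[ℂ] H} (hA : ∀ i ∈ s, 0 ≤ A i) :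
    opTrace b (∑ i ∈ s, A i) = ∑ i ∈ s, opTrace b (A i) := by
  classical
  induction s using Finset.induction_on with
  | empty => simp [opTrace_zero]
  | insert j s hj ih =>
    rw [sum_insert hj, sum_insert hj, opTrace_add b (hA j (mem_insert_self j s))
      (sum_nonneg fun i hi => hA i (mem_insert_of_mem hi)),
      ih fun i hi => hA i (mem_insert_of_mem hi)]

theorem opTrace_conj_isometry {t q : H →L[ℂ] H} (ht : star t * t = 1) (hq : 0 ≤ q) :
    opTrace b (t * q * star t) = opTrace b q := by
  obtain ⟨s, rfl⟩ := CStarAlgebra.nonneg_iff_eq_star_mul_self.1 hq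
  calc opTrace b (t * (star s * s) * star t)
      = opTrace b (star (s * star t) * (s * star t)) := by
        simp only [star_mul, star_star, mul_assoc]
    _ = opTrace b (s * (star t * t) * star s) := by
        rw [← opTrace_mul_star_self]; simp only [star_mul, star_star, mul_assoc]
    _ = opTrace b (star s * s) := by rw [ht, mul_one, opTrace_mul_star_self]

theorem opTrace_sum_conj_isometry {κ : Type*} [Fintype κ] {t : κ → H →L[ℂ] H}
    (ht : ∀ i, star (t i) * t i = 1) {q : H →L[ℂ] H} (hq : 0 ≤ q) :
    opTrace b (∑ i, t i * q * star (t i)) = Fintype.card κ * opTrace b q := by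
  rw [opTrace_sum b _ fun i _ => star_right_conjugate_nonneg hq (t i)]
  simp [opTrace_conj_isometry b (ht _) hq]

end OpTrace

theorem eq_geom_sum_mul_of_eq_add_mul {R : Type*} [CommSemiring R] {a : ℕ → R} {c r : R}
    (h0 : a 0 = 0) (hsucc : ∀ k, a (k + 1) = c + r * a k) (k : ℕ) :
    a k = (∑ j ∈ range k, r ^ j) * c := by
  induction k with
  | zero => simp [h0]
  | succ k ih => rw [hsucc, ih, geom_sum_succ]; ring

/-- For isometries `t_1, …, t_n` with pairwise orthogonal ranges
(`tᵢ* tⱼ = δᵢⱼ · 1`) and `Θ x = ∑ tᵢ x tᵢ*`, one has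
`Tr(1 - Θ^k(1)) = (∑_{j<k} n^j) · Tr(1 - Θ(1))` in `[0,∞]` for every `k ≥ 1`;
consequently, if `Tr(1 - Θ(1)) < ∞`, then
`Tr(1 - Θ^k(1)) / ∑_{j<k} n^j → Tr(1 - Θ(1))`. -/
theorem isometric_curvature
    {H : Type*} [NormedAddCommGroup H] [InnerProductSpace ℂ H] [CompleteSpace H]
    {ι : Type*} (b : HilbertBasis ι ℂ H)
    (n : ℕ) (t : Fin n → H →L[ℂ] H)
    (hiso : ∀ i j, star (t i) * t j = if i = j then 1 else 0)
    (Θ : (H →L[ℂ] H) → (H →L[ℂ] H))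
    (hΘ : ∀ x, Θ x = ∑ i, t i * x * star (t i)) :
    (∀ k : ℕ, 1 ≤ k →
      opTrace b (1 - Θ^[k] 1)
        = (∑ j ∈ Finset.range k, (n : ℝ≥0∞) ^ j) * opTrace b (1 - Θ 1)) ∧
    (opTrace b (1 - Θ 1) ≠ ⊤ →
      Filter.Tendsto
        (fun k => opTrace b (1 - Θ^[k] 1) / ∑ j ∈ Finset.range k, (n : ℝ≥0∞) ^ j)
        Filter.atTop (nhds (opTrace b (1 - Θ 1)))) := by
  set φ := sumConjStarHom t hiso
  obtain rfl : Θ = φ := funext hΘ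
  have hproj : ∀ k, IsStarProjection (φ^[k] 1) := by
    intro k
    induction k with
    | zero => exact .one _
    | succ k ih => rw [Function.iterate_succ_apply']; exact ih.map φ
  have hstep : ∀ k, opTrace b (1 - φ^[k + 1] 1)
      = opTrace b (1 - φ 1) + n * opTrace b (1 - φ^[k] 1) := by
    intro k
    have hdecomp : 1 - φ^[k + 1] 1 = (1 - φ 1) + φ (1 - φ^[k] 1) := by
      rw [Function.iterate_succ_apply', map_sub]; abel
    have hq := (hproj k).one_sub
    rw [hdecomp, opTrace_add b ((IsStarProjection.one _).map φ).one_sub.nonneg (hq.map φ).nonneg,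
      hΘ (1 - φ^[k] 1), opTrace_sum_conj_isometry b (fun i => by simpa using hiso i i) hq.nonneg,
      Fintype.card_fin]
  have hformula := eq_geom_sum_mul_of_eq_add_mul (a := fun k => opTrace b (1 - φ^[k] 1))
    (by rw [Function.iterate_zero_apply, sub_self, opTrace_zero]) hstep
  refine ⟨fun k _ => hformula k, fun _ => tendsto_const_nhds.congr' ?_⟩
  filter_upwards [eventually_ge_atTop 1] with k hk
  have hc0 : ∑ j ∈ range k, (n : ℝ≥0∞) ^ j ≠ 0 := fun h => by
    simpa using sum_eq_zero_iff.1 h 0 (mem_range.2 hk)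
  have hctop : ∑ j ∈ range k, (n : ℝ≥0∞) ^ j ≠ ⊤ :=
    ENNReal.sum_ne_top.2 fun j _ => ENNReal.pow_ne_top (ENNReal.natCast_ne_top n)
  rw [hformula, mul_comm, ENNReal.mul_div_cancel_right hc0 hctop]
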